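/- (Polynomial Dehn–Sommerville relation for balanced simplicial complexes, h-version.) Let Δ be a balanced simplicial complex of type a = (a_1, …, a_m) with flag h-numbers (h_b)_{b ≤ a}, and let d = |a|. Then the identity ∑_{b ≤ a} (h_b − h_{a−b}) x^b (1+x)^{a−b} = ∑_{F ∈ Δ} (1 − m_F) x^{b(F)} holds in ℤ[x_1, …, x_m], where (1+x)^c := ∏_j (1+x_j)^{c_j}. -/

import Mathlib

open Finset MvPolynomial

/-- A (finite, abstract) simplicial complex: a finite collection of finite subsets of `V`
containing the empty set and closed under taking subsets. -/
def IsSimplicialComplex {V : Type*} [DecidableEq V] (Δ : Finset (Finset V)) : Prop :=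
  ∅ ∈ Δ ∧ ∀ F ∈ Δ, ∀ G ⊆ F, G ∈ Δ

/-- `Δ` has dimension `d - 1`: every face has at most `d` elements and some face has
exactly `d` elements. -/
def HasDimension {V : Type*} [DecidableEq V] (Δ : Finset (Finset V)) (d : ℕ) : Prop :=
  (∀ F ∈ Δ, F.card ≤ d) ∧ ∃ F ∈ Δ, F.card = d

/-- `fnum Δ i` is the number of faces of `Δ` with exactly `i` elements, i.e. `f_{i-1}`. -/
def fnum {V : Type*} [DecidableEq V] (Δ : Finset (Finset V)) (i : ℕ) : ℕ :=
  (Δ.filter fun F => F.card = i).card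

/-- The multiplicity `m_F = ∑_{G ∈ Δ, F ⊆ G} (−1)^{d−|G|}` of a face `F` of a complex of
dimension `d − 1` (all faces `G` satisfy `|G| ≤ d`, so `d - G.card` is the usual subtraction). -/
def mult {V : Type*} [DecidableEq V] (Δ : Finset (Finset V)) (d : ℕ) (F : Finset V) : ℤ :=
  ∑ G ∈ Δ.filter (fun G => F ⊆ G), (-1 : ℤ) ^ (d - G.card)

/-- The reduced Euler characteristic `χ̃(Γ) = ∑_{G ∈ Γ} (−1)^{|G|−1}`; the exponent is
written `|G| + 1`, which has the same parity as `|G| − 1` (the empty face contributes `−1`). -/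
def chiTilde {V : Type*} [DecidableEq V] (Γ : Finset (Finset V)) : ℤ :=
  ∑ G ∈ Γ, (-1 : ℤ) ^ (G.card + 1)

/-- The link of a face `F` in `Δ`. -/
def link {V : Type*} [DecidableEq V] (Δ : Finset (Finset V)) (F : Finset V) :
    Finset (Finset V) :=
  Δ.filter fun G => G ∩ F = ∅ ∧ G ∪ F ∈ Δ

/-- `Δ` (of dimension `d − 1`) is reciprocal if `m_F ∈ {0, 1}` for every nonempty face. -/
def IsReciprocal {V : Type*} [DecidableEq V] (Δ : Finset (Finset V)) (d : ℕ) : Prop :=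
  ∀ F ∈ Δ, F ≠ ∅ → mult Δ d F = 0 ∨ mult Δ d F = 1

/-- `Δ` (of dimension `d − 1`) is semi-Eulerian if `m_F = 1` for every nonempty face. -/
def IsSemiEulerian {V : Type*} [DecidableEq V] (Δ : Finset (Finset V)) (d : ℕ) : Prop :=
  ∀ F ∈ Δ, F ≠ ∅ → mult Δ d F = 1

/-- `fint Δ d i` is the number of interior faces (nonempty faces with `m_F = 1`) of `Δ`
with exactly `i` elements, i.e. `f^int_{i-1}`. -/
def fint {V : Type*} [DecidableEq V] (Δ : Finset (Finset V)) (d : ℕ) (i : ℕ) : ℕ :=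
  (Δ.filter fun F => F.card = i ∧ F ≠ ∅ ∧ mult Δ d F = 1).card

/-- `bvec κ F j` is the number of vertices of `F` with color `j`. -/
def bvec {V : Type*} [DecidableEq V] {m : ℕ} (κ : V → Fin m) (F : Finset V) (j : Fin m) : ℕ :=
  (F.filter fun v => κ v = j).card

/-- `Δ` is balanced of type `a` with respect to the coloring `κ`: every face of `Δ` that is
maximal under inclusion has exactly `a j` vertices of color `j`, for each color `j`. -/
def IsBalanced {V : Type*} [DecidableEq V] {m : ℕ} (Δ : Finset (Finset V))
    (κ : V → Fin m) (a : Fin m → ℕ) : Prop :=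
  ∀ F ∈ Δ, (∀ G ∈ Δ, F ⊆ G → G = F) → ∀ j, bvec κ F j = a j

/-! Substituting `x ↦ x / (1 + x)` into the defining identity of the flag `h`-numbers and
clearing denominators gives `∑_b h_b x^b (1+x)^(a-b) = ∑_F x^b(F)`, while substituting
`x ↦ (1 + x) / x` gives `∑_b h_(a-b) x^b (1+x)^(a-b) = ∑_F (-1)^(d-|F|) (1+x)^b(F)`. Expanding
each `(1+x)^b(G)` over the subsets of `G` turns the latter into `∑_F m_F x^b(F)`. -/

section Homogenize

variable {m : ℕ} {ι : Type*}

lemma div_pow_mul_div_pow_mul_pow {K : Type*} [Field K] {p q r : K} (hq : q ≠ 0) {b c : ℕ}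
    (hbc : b ≤ c) : (p / q) ^ b * (r / q) ^ (c - b) * q ^ c = p ^ b * r ^ (c - b) := by
  obtain ⟨k, rfl⟩ := Nat.exists_eq_add_of_le hbc
  rw [Nat.add_sub_cancel_left, pow_add, div_pow, div_pow]
  field_simp

lemma sum_Iic_mul_prod_pow_homogenize {K : Type*} [Field K] {a : Fin m → ℕ}
    {c : (Fin m → ℕ) → ℤ} {s : Finset ι} {β : ι → Fin m → ℕ} (hβ : ∀ i ∈ s, β i ≤ a)
    (hc : (∑ b ∈ Iic a, C (c b) * ∏ j, X j ^ b j : MvPolynomial (Fin m) ℤ)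
        = ∑ i ∈ s, (∏ j, X j ^ β i j) * ∏ j, (1 - X j) ^ (a j - β i j))
    (p q : Fin m → K) (hq : ∀ j, q j ≠ 0) :
    ∑ b ∈ Iic a, (c b : K) * (∏ j, p j ^ b j) * ∏ j, q j ^ (a j - b j)
      = ∑ i ∈ s, (∏ j, p j ^ β i j) * ∏ j, (q j - p j) ^ (a j - β i j) := by
  have H := congrArg (aeval fun j => p j / q j) hc
  simp only [map_sum, map_mul, map_prod, map_pow, map_sub, map_one, aeval_X, eq_intCast C,
    map_intCast] at H
  calc ∑ b ∈ Iic a, (c b : K) * (∏ j, p j ^ b j) * ∏ j, q j ^ (a j - b j)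
      = (∑ b ∈ Iic a, (c b : K) * ∏ j, (p j / q j) ^ b j) * ∏ j, q j ^ a j := by
        rw [sum_mul]
        refine sum_congr rfl fun b hb => ?_
        rw [mul_assoc, mul_assoc, ← prod_mul_distrib, ← prod_mul_distrib]
        congr 1
        refine prod_congr rfl fun j _ => ?_
        simpa [div_self (hq j)] using
          (div_pow_mul_div_pow_mul_pow (p := p j) (r := q j) (hq j) (mem_Iic.mp hb j)).symm
    _ = (∑ i ∈ s, (∏ j, (p j / q j) ^ β i j) * ∏ j, (1 - p j / q j) ^ (a j - β i j))
          * ∏ j, q j ^ a j := by rw [H]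
    _ = ∑ i ∈ s, (∏ j, p j ^ β i j) * ∏ j, (q j - p j) ^ (a j - β i j) := by
        rw [sum_mul]
        refine sum_congr rfl fun i hi => ?_
        rw [← prod_mul_distrib, ← prod_mul_distrib, ← prod_mul_distrib]
        refine prod_congr rfl fun j _ => ?_
        rw [one_sub_div (hq j)]
        exact div_pow_mul_div_pow_mul_pow (hq j) (hβ i hi j)

lemma sum_Iic_mul_prod_pow_homogenize_of_isDomain {R : Type*} [CommRing R] [IsDomain R]
    {a : Fin m → ℕ} {c : (Fin m → ℕ) → ℤ} {s : Finset ι} {β : ι → Fin m → ℕ}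
    (hβ : ∀ i ∈ s, β i ≤ a)
    (hc : (∑ b ∈ Iic a, C (c b) * ∏ j, X j ^ b j : MvPolynomial (Fin m) ℤ)
        = ∑ i ∈ s, (∏ j, X j ^ β i j) * ∏ j, (1 - X j) ^ (a j - β i j))
    (p q : Fin m → R) (hq : ∀ j, q j ≠ 0) :
    ∑ b ∈ Iic a, (c b : R) * (∏ j, p j ^ b j) * ∏ j, q j ^ (a j - b j)
      = ∑ i ∈ s, (∏ j, p j ^ β i j) * ∏ j, (q j - p j) ^ (a j - β i j) := by
  have hinj := IsFractionRing.injective R (FractionRing R)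
  apply hinj
  simp only [map_sum, map_mul, map_prod, map_pow, map_sub, map_intCast]
  exact sum_Iic_mul_prod_pow_homogenize hβ hc _ _
    fun j => (map_ne_zero_iff _ hinj).mpr (hq j)

lemma sum_Iic_tsub_comm {M : Type*} [AddCommMonoid M] [Fintype ι] [DecidableEq ι]
    (a : ι → ℕ) (f : (ι → ℕ) → (ι → ℕ) → M) :
    ∑ b ∈ Iic a, f b (a - b) = ∑ b ∈ Iic a, f (a - b) b :=
  sum_nbij' (a - ·) (a - ·) (fun _ _ => mem_Iic.mpr tsub_le_self)
    (fun _ _ => mem_Iic.mpr tsub_le_self)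
    (fun _ hb => tsub_tsub_cancel_of_le (mem_Iic.mp hb))
    (fun _ hb => tsub_tsub_cancel_of_le (mem_Iic.mp hb))
    fun _ hb => by rw [tsub_tsub_cancel_of_le (mem_Iic.mp hb)]

end Homogenize

section Complex

variable {V : Type*} [DecidableEq V] {m : ℕ}

lemma sum_sum_superset_mul_prod {R : Type*} [CommSemiring R] {Δ : Finset (Finset V)}
    (hΔ : ∀ G ∈ Δ, ∀ F ⊆ G, F ∈ Δ) (w : Finset V → R) (y : V → R) :
    ∑ F ∈ Δ, (∑ G ∈ Δ with F ⊆ G, w G) * ∏ v ∈ F, y v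
      = ∑ G ∈ Δ, w G * ∏ v ∈ G, (1 + y v) := by
  simp_rw [sum_mul]
  rw [sum_comm' (t' := Δ) (s' := fun G => Δ.filter (· ⊆ G))
    (by intro F G; simp only [mem_filter]; tauto)]
  refine sum_congr rfl fun G hG => ?_
  have : Δ.filter (· ⊆ G) = G.powerset := by
    ext F
    simp only [mem_filter, mem_powerset]
    exact ⟨And.right, fun hFG => ⟨hΔ G hG F hFG, hFG⟩⟩
  rw [this, prod_one_add, mul_sum]

lemma prod_comp_eq_prod_pow_bvec {M : Type*} [CommMonoid M] (κ : V → Fin m) (F : Finset V)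
    (w : Fin m → M) : ∏ v ∈ F, w (κ v) = ∏ j, w j ^ bvec κ F j := by
  rw [← prod_fiberwise' F κ w]
  exact prod_congr rfl fun j _ => prod_const _

lemma card_eq_sum_bvec (κ : V → Fin m) (F : Finset V) : F.card = ∑ j, bvec κ F j :=
  card_eq_sum_card_fiberwise fun v _ => mem_univ (κ v)

lemma bvec_mono (κ : V → Fin m) {F G : Finset V} (h : F ⊆ G) : bvec κ F ≤ bvec κ G :=
  fun _ => card_le_card (filter_subset_filter _ h)

lemma IsBalanced.bvec_le {Δ : Finset (Finset V)} {κ : V → Fin m} {a : Fin m → ℕ}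
    (hbal : IsBalanced Δ κ a) {F : Finset V} (hF : F ∈ Δ) : bvec κ F ≤ a := by
  obtain ⟨G, hFG, hGmax⟩ := Δ.exists_le_maximal hF
  have hG : ∀ G' ∈ Δ, G ⊆ G' → G' = G := fun _ hG' hGG' => (hGmax.eq_of_le hG' hGG').symm
  exact (bvec_mono κ hFG).trans fun j => (hbal G hGmax.prop hG j).le

lemma prod_neg_one_pow_tsub_bvec {R : Type*} [CommRing R] {κ : V → Fin m} {a : Fin m → ℕ}
    {F : Finset V} (hF : bvec κ F ≤ a) :
    ∏ j, (-1 : R) ^ (a j - bvec κ F j) = (-1) ^ (∑ j, a j - F.card) := by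
  rw [prod_pow_eq_pow_sum, sum_tsub_distrib _ fun j _ => hF j, card_eq_sum_bvec]

lemma sum_C_mult_mul_prod_X_pow {Δ : Finset (Finset V)} (hΔ : IsSimplicialComplex Δ)
    (κ : V → Fin m) (d : ℕ) :
    (∑ F ∈ Δ, C (mult Δ d F) * ∏ j, X j ^ bvec κ F j : MvPolynomial (Fin m) ℤ)
      = ∑ G ∈ Δ, C ((-1) ^ (d - G.card)) * ∏ j, (1 + X j) ^ bvec κ G j := by
  simp_rw [mult, map_sum, ← prod_comp_eq_prod_pow_bvec κ]
  exact sum_sum_superset_mul_prod hΔ.2 _ _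

end Complex

theorem flag_polynomial_DS_general {V : Type*} [DecidableEq V] (Δ : Finset (Finset V)) {m : ℕ}
    (κ : V → Fin m) (a : Fin m → ℕ) (d : ℕ) (hd : d = ∑ j, a j)
    (hΔ : IsSimplicialComplex Δ) (hbal : IsBalanced Δ κ a)
    (h : (Fin m → ℕ) → ℤ)
    (hh : (∑ b ∈ Finset.Iic a, C (h b) * ∏ j, X j ^ b j : MvPolynomial (Fin m) ℤ)
        = ∑ F ∈ Δ, (∏ j, X j ^ bvec κ F j) * ∏ j, (1 - X j) ^ (a j - bvec κ F j)) :
    (∑ b ∈ Finset.Iic a, C (h b - h (a - b)) * (∏ j, X j ^ b j) * ∏ j, (1 + X j) ^ (a j - b j)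
        : MvPolynomial (Fin m) ℤ)
      = ∑ F ∈ Δ, C (1 - mult Δ d F) * ∏ j, X j ^ bvec κ F j := by
  have hβ : ∀ F ∈ Δ, bvec κ F ≤ a := fun F hF => hbal.bvec_le hF
  have hX1 : ∀ j, (1 + X j : MvPolynomial (Fin m) ℤ) ≠ 0 := fun j h0 => by
    simpa using congrArg constantCoeff h0
  have h_face : ∑ b ∈ Iic a, C (h b) * (∏ j, X j ^ b j) * ∏ j, (1 + X j) ^ (a j - b j)
      = ∑ F ∈ Δ, ∏ j, (X j : MvPolynomial (Fin m) ℤ) ^ bvec κ F j := by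
    simpa [eq_intCast C] using
      sum_Iic_mul_prod_pow_homogenize_of_isDomain hβ hh X _ hX1
  have h_mult : ∑ b ∈ Iic a, C (h (a - b)) * (∏ j, X j ^ b j) * ∏ j, (1 + X j) ^ (a j - b j)
      = ∑ F ∈ Δ, C (mult Δ d F) * ∏ j, (X j : MvPolynomial (Fin m) ℤ) ^ bvec κ F j := by
    rw [sum_C_mult_mul_prod_X_pow hΔ]
    refine (sum_Iic_tsub_comm a fun u v =>
      C (h v) * (∏ j, X j ^ u j) * ∏ j, (1 + X j) ^ v j).trans ?_
    calc _ = ∑ b ∈ Iic a, (h b : MvPolynomial (Fin m) ℤ) * (∏ j, (1 + X j) ^ b j)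
          * ∏ j, X j ^ (a j - b j) :=
          sum_congr rfl fun b _ => by simp only [Pi.sub_apply, eq_intCast C]; ring
      _ = ∑ F ∈ Δ, (∏ j, (1 + X j) ^ bvec κ F j) * ∏ j, (X j - (1 + X j)) ^ (a j - bvec κ F j) :=
          sum_Iic_mul_prod_pow_homogenize_of_isDomain hβ hh _ _ X_ne_zero
      _ = _ := sum_congr rfl fun F hF => by
          rw [mul_comm]
          simp only [sub_add_cancel_right, prod_neg_one_pow_tsub_bvec (hβ F hF), ← hd, map_pow,
            map_neg, map_one]
  simp only [map_sub, sub_mul, sum_sub_distrib, h_face, h_mult, map_one, one_mul]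

/-- Polynomial Dehn–Sommerville relation for balanced simplicial complexes, h-version:
`∑_{b ≤ a} (h_b − h_{a−b}) x^b (1+x)^{a−b} = ∑_{F ∈ Δ} (1 − m_F) x^{b(F)}`. -/
theorem flag_polynomial_DS {V : Type*} [DecidableEq V] (Δ : Finset (Finset V)) {m : ℕ}
    (hm : 1 ≤ m) (κ : V → Fin m) (a : Fin m → ℕ) (d : ℕ) (hd : d = ∑ j, a j) (hd1 : 1 ≤ d)
    (hΔ : IsSimplicialComplex Δ) (hbal : IsBalanced Δ κ a)
    (h : (Fin m → ℕ) → ℤ)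
    (hh : (∑ b ∈ Finset.Iic a, C (h b) * ∏ j, X j ^ b j : MvPolynomial (Fin m) ℤ)
        = ∑ F ∈ Δ, (∏ j, X j ^ bvec κ F j) * ∏ j, (1 - X j) ^ (a j - bvec κ F j)) :
    (∑ b ∈ Finset.Iic a, C (h b - h (a - b)) * (∏ j, X j ^ b j) * ∏ j, (1 + X j) ^ (a j - b j)
        : MvPolynomial (Fin m) ℤ)
      = ∑ F ∈ Δ, C (1 - mult Δ d F) * ∏ j, X j ^ bvec κ F j :=
  flag_polynomial_DS_general Δ κ a d hd hΔ hbal h hh
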